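/- Let k be a field of characteristic 2, S the polynomial ring in the entries of a generic symmetric n×n matrix, f its determinant, and m the maximal homogeneous ideal. Then f·x_{11} lies in the Frobenius power m^{[2]} generated by the squares of the variables. -/

import Mathlib

/-!
In characteristic 2 the signs in the Leibniz expansion of a determinant disappear, and for a
symmetric matrix the terms of `σ` and `σ⁻¹` coincide, so they cancel in pairs. Of the
involutions, every `σ ≠ 1` swaps some `i ↔ σ i` and its term contains the square
`A (σ i) i ^ 2`. Hence `det A ≡ ∏ i, A i i` modulo the squares of the off-diagonal entries,
and multiplying by the diagonal entry `x₁₁` turns `∏ i, x_{ii}` into a multiple of `x₁₁ ^ 2`.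
-/

open MvPolynomial

namespace Matrix

variable {n R : Type*} [Fintype n] [CommRing R] {A : Matrix n n R}

theorem IsSymm.prod_perm_inv (hA : A.IsSymm) (σ : Equiv.Perm n) :
    ∏ i, A (σ⁻¹ i) i = ∏ i, A (σ i) i := by
  rw [← Equiv.prod_comp σ fun i ↦ A (σ⁻¹ i) i]
  simp only [Equiv.Perm.coe_inv, Equiv.symm_apply_apply]
  exact Finset.prod_congr rfl fun i _ ↦ hA.apply _ _

variable [DecidableEq n]

theorem IsSymm.prod_perm_eq_zero_of_involutive (hA : A.IsSymm)
    (hsq : ∀ i j, i ≠ j → A i j ^ 2 = 0) {σ : Equiv.Perm n} (hσ : σ⁻¹ = σ) (h1 : σ ≠ 1) :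
    ∏ i, A (σ i) i = 0 := by
  obtain ⟨i, hi⟩ : ∃ i, σ i ≠ i := by
    by_contra! h
    exact h1 (Equiv.ext h)
  have hσσ : σ (σ i) = i := by
    nth_rw 1 [← hσ]
    exact σ.symm_apply_apply i
  have hmem : σ i ∈ Finset.univ.erase i := Finset.mem_erase.mpr ⟨hi, Finset.mem_univ _⟩
  rw [← Finset.mul_prod_erase _ _ (Finset.mem_univ i), ← Finset.mul_prod_erase _ _ hmem,
    hσσ, hA.apply, ← mul_assoc, ← sq, hsq _ _ hi.symm, zero_mul]

theorem IsSymm.det_eq_prod_diag_of_sq_eq_zero (h2 : (2 : R) = 0) (hA : A.IsSymm)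
    (hsq : ∀ i j, i ≠ j → A i j ^ 2 = 0) : A.det = ∏ i, A i i := by
  have hsign (σ : Equiv.Perm n) (x : R) : Equiv.Perm.sign σ • x = x := by
    rcases Int.units_eq_one_or (Equiv.Perm.sign σ) with h | h
    · rw [h, one_smul]
    · rw [h, Units.neg_smul, one_smul, neg_eq_iff_add_eq_zero, ← two_mul, h2, zero_mul]
  rw [det_apply, ← Finset.add_sum_erase _ _ (Finset.mem_univ 1)]
  simp only [hsign, Equiv.Perm.coe_one, id_eq, add_eq_left]
  refine Finset.sum_involution (fun σ _ ↦ σ⁻¹) (fun σ _ ↦ ?_) (fun σ hσ hne ↦ ?_)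
    (fun σ hσ ↦ by simpa using hσ) (fun σ _ ↦ inv_inv σ)
  · rw [hA.prod_perm_inv, ← two_mul, h2, zero_mul]
  · exact fun hinv ↦ hne (hA.prod_perm_eq_zero_of_involutive hsq hinv (Finset.ne_of_mem_erase hσ))

theorem IsSymm.det_sub_prod_diag_mem (h2 : (2 : R) = 0) (hA : A.IsSymm) {I : Ideal R}
    (hI : ∀ i j, i ≠ j → A i j ^ 2 ∈ I) : A.det - ∏ i, A i i ∈ I := by
  rw [← Ideal.Quotient.eq_zero_iff_mem, map_sub, RingHom.map_det, map_prod, sub_eq_zero]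
  have h2' : (2 : R ⧸ I) = 0 := by rw [← map_ofNat (Ideal.Quotient.mk I) 2, h2, map_zero]
  refine (hA.map _).det_eq_prod_diag_of_sq_eq_zero h2' fun i j hij ↦ ?_
  simpa [← map_pow, Ideal.Quotient.eq_zero_iff_mem] using hI i j hij

end Matrix

/-- In characteristic 2, for the generic symmetric `n × n` matrix with determinant `f`, the
product `f * x_{11}` lies in the Frobenius power `m^{[2]}`, the ideal generated by the squares
of all the variables. -/
theorem stmt_1 (k : Type*) [Field k] [CharP k 2] (n : ℕ) (hn : 0 < n)
    (M : Matrix (Fin n) (Fin n)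
      (MvPolynomial {ij : Fin n × Fin n // ij.1 ≤ ij.2} k))
    (hM : ∀ i j, M i j = X ⟨(min i j, max i j), min_le_max⟩) :
    M.det * X (⟨(⟨0, hn⟩, ⟨0, hn⟩), le_rfl⟩ : {ij : Fin n × Fin n // ij.1 ≤ ij.2}) ∈
      Ideal.span (Set.range fun v : {ij : Fin n × Fin n // ij.1 ≤ ij.2} =>
        (X v : MvPolynomial {ij : Fin n × Fin n // ij.1 ≤ ij.2} k) ^ 2) := by
  set I := Ideal.span (Set.range fun v : {ij : Fin n × Fin n // ij.1 ≤ ij.2} =>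
    (X v : MvPolynomial {ij : Fin n × Fin n // ij.1 ≤ ij.2} k) ^ 2)
  set z : Fin n := ⟨0, hn⟩
  have hsymm : M.IsSymm := Matrix.IsSymm.ext fun i j ↦ by simp only [hM, min_comm, max_comm]
  have hsq_mem : ∀ i j, M i j ^ 2 ∈ I := fun i j ↦ hM i j ▸ Ideal.subset_span ⟨_, rfl⟩
  have hdiag : (∏ i, M i i) * M z z ∈ I := by
    rw [← Finset.mul_prod_erase _ _ (Finset.mem_univ z), mul_comm, ← mul_assoc, ← sq]
    exact I.mul_mem_right _ (hsq_mem z z)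
  have hoff := hsymm.det_sub_prod_diag_mem CharTwo.two_eq_zero fun i j _ ↦ hsq_mem i j
  simpa [hM, z, sub_mul] using I.add_mem (I.mul_mem_right (M z z) hoff) hdiag
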